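/- arXiv:2104.13796 — 5 statements merged into one kernel-verified Lean document; each statement's English description precedes it below -/
import Mathlib

section
/- Fix t ∈ ℝ and K > 0. Let A_N⁰ : ℝ × ℝ → ℂ (for N ∈ ℕ) and A : ℝ × ℝ → ℂ be jointly measurable functions such that: (a) for every s ∈ ℝ, ∫_ℝ |A_N⁰(N(t + s/(2N)), μ) − A(t, μ)|² dμ → 0 and ∫_ℝ |A_N⁰(N(t − s/(2N)), μ) − A(t, μ)|² dμ → 0 as N → ∞; (b) for every r ∈ ℝ and N ∈ ℕ, μ ↦ A_N⁰(r, μ) and μ ↦ A(t, μ) lie in L²(ℝ) with L²-norm at most K; (c) for every r ∈ ℝ and N ∈ ℕ, μ ↦ A_N⁰(r, μ) and μ ↦ A(t, μ) are differentiable everywhere and their derivatives μ ↦ ∂_μ A_N⁰(r, μ) and μ ↦ ∂_μ A(t, μ) lie in L²(ℝ) with L²-norm at most K. Then, as N → ∞, ∫_ℝ | ∫_ℝ e^{iμs} ( A_N⁰(N(t + s/(2N)), μ) · conj(A_N⁰(N(t − s/(2N)), μ)) − A(t, μ) · conj(A(t, μ)) ) dμ |² ds → 0. (Note that each inner integral over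 μ converges absolutely by the Cauchy–Schwarz inequality, since it is the integral of a difference of products of L² functions.) -/
/-!
Dominated convergence in `s`. Write `A_N^± := A_N⁰(N(t ± s/(2N)), ·)`. For fixed `s` the inner
integral is bounded by the `L¹` norm of `A_N⁺ · conj A_N⁻ - |A(t, ·)|²`, which tends to zero by
Cauchy–Schwarz because `A_N^± → A(t, ·)` in `L²`. For the domination, the inner integral is a
Fourier transform of a function `h` with `‖h‖₁ ≤ 2K²` and `‖h'‖₁ ≤ 4K²` (Cauchy–Schwarz and the
product rule); since the Fourier transform turns `h'` into multiplication by `2πiξ`, the squared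
inner integral is at most `20 K⁴ / (1 + s²)`, which is integrable in `s`.
-/

open MeasureTheory Filter Complex Real ComplexConjugate
open scoped FourierTransform

section CauchySchwarz

variable {α E : Type*} [MeasurableSpace α] {μ : Measure α} [NormedAddCommGroup E]

theorem integral_norm_mul_norm_le_sqrt_mul_sqrt {f g : α → E} (hf : MemLp f 2 μ)
    (hg : MemLp g 2 μ) :
    ∫ x, ‖f x‖ * ‖g x‖ ∂μ ≤ √(∫ x, ‖f x‖ ^ 2 ∂μ) * √(∫ x, ‖g x‖ ^ 2 ∂μ) := by
  have h := integral_mul_norm_le_Lp_mul_Lq (μ := μ) Real.HolderConjugate.two_two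
    (by simpa using hf) (by simpa using hg)
  rw [Real.sqrt_eq_rpow, Real.sqrt_eq_rpow]
  simpa only [Real.rpow_two] using h

theorem MeasureTheory.MemLp.sqrt_integral_norm_sq_le {f : α → E} (hf : MemLp f 2 μ) {K : ℝ}
    (hK : 0 ≤ K) (hfK : eLpNorm f 2 μ ≤ ENNReal.ofReal K) : √(∫ x, ‖f x‖ ^ 2 ∂μ) ≤ K := by
  rw [hf.eLpNorm_eq_integral_rpow_norm two_ne_zero ENNReal.ofNat_ne_top,
    ENNReal.ofReal_le_ofReal_iff hK] at hfK
  rw [Real.sqrt_eq_rpow]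
  simpa only [ENNReal.toReal_ofNat, Real.rpow_two, one_div] using hfK

theorem integral_norm_add_le {f g : α → E} (hf : Integrable f μ) (hg : Integrable g μ) :
    ∫ x, ‖f x + g x‖ ∂μ ≤ ∫ x, ‖f x‖ ∂μ + ∫ x, ‖g x‖ ∂μ :=
  (integral_mono (hf.add hg).norm (hf.norm.add hg.norm) fun _ => norm_add_le _ _).trans_eq
    (integral_add hf.norm hg.norm)

theorem integral_norm_sub_le {f g : α → E} (hf : Integrable f μ) (hg : Integrable g μ) :
    ∫ x, ‖f x - g x‖ ∂μ ≤ ∫ x, ‖f x‖ ∂μ + ∫ x, ‖g x‖ ∂μ :=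
  (integral_mono (hf.sub hg).norm (hf.norm.add hg.norm) fun _ => norm_sub_le _ _).trans_eq
    (integral_add hf.norm hg.norm)

theorem integrable_mul_conj {f g : α → ℂ} (hf : MemLp f 2 μ) (hg : MemLp g 2 μ) :
    Integrable (fun x => f x * conj (g x)) μ :=
  hf.integrable_mul hg.star

theorem integral_norm_mul_conj_le {f g : α → ℂ} (hf : MemLp f 2 μ) (hg : MemLp g 2 μ) :
    ∫ x, ‖f x * conj (g x)‖ ∂μ ≤ √(∫ x, ‖f x‖ ^ 2 ∂μ) * √(∫ x, ‖g x‖ ^ 2 ∂μ) := by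
  simpa only [norm_mul, RCLike.norm_conj] using integral_norm_mul_norm_le_sqrt_mul_sqrt hf hg

theorem integral_norm_mul_conj_le_of_eLpNorm_le {f g : α → ℂ} {K : ℝ} (hK : 0 ≤ K)
    (hf : MemLp f 2 μ) (hfK : eLpNorm f 2 μ ≤ ENNReal.ofReal K)
    (hg : MemLp g 2 μ) (hgK : eLpNorm g 2 μ ≤ ENNReal.ofReal K) :
    ∫ x, ‖f x * conj (g x)‖ ∂μ ≤ K ^ 2 :=
  calc ∫ x, ‖f x * conj (g x)‖ ∂μ
      ≤ √(∫ x, ‖f x‖ ^ 2 ∂μ) * √(∫ x, ‖g x‖ ^ 2 ∂μ) := integral_norm_mul_conj_le hf hg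
    _ ≤ K * K := mul_le_mul (hf.sqrt_integral_norm_sq_le hK hfK)
        (hg.sqrt_integral_norm_sq_le hK hgK) (sqrt_nonneg _) hK
    _ = K ^ 2 := (sq K).symm

end CauchySchwarz

theorem integral_exp_mul_eq_fourier (h : ℝ → ℂ) (s : ℝ) :
    ∫ μ : ℝ, exp (I * μ * s) * h μ = 𝓕 h (-s / (2 * π)) := by
  rw [Real.fourier_real_eq_integral_exp_smul]
  congr 1 with μ
  rw [smul_eq_mul]
  congr 2
  push_cast
  field_simp

theorem norm_integral_exp_mul_le (h : ℝ → ℂ) (s : ℝ) :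
    ‖∫ μ : ℝ, exp (I * μ * s) * h μ‖ ≤ ∫ μ, ‖h μ‖ :=
  integral_exp_mul_eq_fourier h s ▸ VectorFourier.norm_fourierIntegral_le_integral_norm _ _ _ _ _

theorem abs_mul_norm_integral_exp_mul_le {h : ℝ → ℂ} (hd : Differentiable ℝ h)
    (hi : Integrable h) (hi' : Integrable (deriv h)) (s : ℝ) :
    |s| * ‖∫ μ : ℝ, exp (I * μ * s) * h μ‖ ≤ ∫ μ, ‖deriv h μ‖ := by
  have hF : ‖𝓕 (deriv h) (-s / (2 * π))‖ ≤ ∫ μ, ‖deriv h μ‖ :=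
    VectorFourier.norm_fourierIntegral_le_integral_norm _ _ _ _ _
  rw [Real.fourier_deriv hi hd hi', norm_smul] at hF
  rw [integral_exp_mul_eq_fourier]
  convert hF using 2
  simp only [ofReal_div, ofReal_neg, ofReal_mul, ofReal_ofNat, Complex.norm_mul,
    Complex.norm_ofNat, norm_real, norm_eq_abs, abs_of_pos pi_pos, norm_I, mul_one,
    Complex.norm_div, norm_neg]
  field_simp

theorem one_add_sq_mul_sq_norm_integral_exp_mul_le {h : ℝ → ℂ} (hd : Differentiable ℝ h)
    (hi : Integrable h) (hi' : Integrable (deriv h)) (s : ℝ) :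
    (1 + s ^ 2) * ‖∫ μ : ℝ, exp (I * μ * s) * h μ‖ ^ 2 ≤
      (∫ μ, ‖h μ‖) ^ 2 + (∫ μ, ‖deriv h μ‖) ^ 2 := by
  have hJ := norm_integral_exp_mul_le h s
  have hsJ := abs_mul_norm_integral_exp_mul_le hd hi hi' s
  have hJ2 := pow_le_pow_left₀ (norm_nonneg _) hJ 2
  have hsJ2 := pow_le_pow_left₀ (by positivity) hsJ 2
  rw [mul_pow, sq_abs] at hsJ2
  linarith

structure IsW11BoundedBy (a b : ℝ) (h : ℝ → ℂ) : Prop where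
  differentiable : Differentiable ℝ h
  integrable : Integrable h
  integrable_deriv : Integrable (deriv h)
  integral_norm_le : ∫ μ, ‖h μ‖ ≤ a
  integral_norm_deriv_le : ∫ μ, ‖deriv h μ‖ ≤ b

namespace IsW11BoundedBy

variable {a₁ b₁ a₂ b₂ : ℝ} {h₁ h₂ : ℝ → ℂ}

theorem sub (hh₁ : IsW11BoundedBy a₁ b₁ h₁) (hh₂ : IsW11BoundedBy a₂ b₂ h₂) :
    IsW11BoundedBy (a₁ + a₂) (b₁ + b₂) (fun μ => h₁ μ - h₂ μ) := by
  have hderiv : deriv (fun μ => h₁ μ - h₂ μ) = fun μ => deriv h₁ μ - deriv h₂ μ :=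
    funext fun μ => deriv_sub (hh₁.differentiable μ) (hh₂.differentiable μ)
  refine ⟨hh₁.differentiable.sub hh₂.differentiable, hh₁.integrable.sub hh₂.integrable, ?_, ?_, ?_⟩
  · rw [hderiv]
    exact hh₁.integrable_deriv.sub hh₂.integrable_deriv
  · exact (integral_norm_sub_le hh₁.integrable hh₂.integrable).trans
      (add_le_add hh₁.integral_norm_le hh₂.integral_norm_le)
  · rw [hderiv]
    exact (integral_norm_sub_le hh₁.integrable_deriv hh₂.integrable_deriv).trans
      (add_le_add hh₁.integral_norm_deriv_le hh₂.integral_norm_deriv_le)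

theorem sq_norm_integral_exp_mul_le (hh : IsW11BoundedBy a₁ b₁ h₁) (s : ℝ) :
    ‖∫ μ : ℝ, exp (I * μ * s) * h₁ μ‖ ^ 2 ≤ (a₁ ^ 2 + b₁ ^ 2) / (1 + s ^ 2) := by
  rw [le_div_iff₀' (by positivity)]
  refine (one_add_sq_mul_sq_norm_integral_exp_mul_le hh.differentiable hh.integrable
    hh.integrable_deriv s).trans (add_le_add ?_ ?_)
  · exact pow_le_pow_left₀ (integral_nonneg fun _ => norm_nonneg _) hh.integral_norm_le 2
  · exact pow_le_pow_left₀ (integral_nonneg fun _ => norm_nonneg _) hh.integral_norm_deriv_le 2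

end IsW11BoundedBy

structure IsH1BoundedBy (K : ℝ) (f : ℝ → ℂ) : Prop where
  memLp : MemLp f 2
  eLpNorm_le : eLpNorm f 2 volume ≤ ENNReal.ofReal K
  differentiable : Differentiable ℝ f
  memLp_deriv : MemLp (deriv f) 2
  eLpNorm_deriv_le : eLpNorm (deriv f) 2 volume ≤ ENNReal.ofReal K

theorem IsH1BoundedBy.mul_conj {K : ℝ} {f g : ℝ → ℂ} (hf : IsH1BoundedBy K f)
    (hg : IsH1BoundedBy K g) (hK : 0 ≤ K) :
    IsW11BoundedBy (K ^ 2) (2 * K ^ 2) (fun μ => f μ * conj (g μ)) := by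
  have hD (μ : ℝ) : HasDerivAt (fun μ => f μ * conj (g μ))
      (deriv f μ * conj (g μ) + f μ * conj (deriv g μ)) μ :=
    (hf.differentiable μ).hasDerivAt.mul (hg.differentiable μ).hasDerivAt.star
  have hderiv : deriv (fun μ => f μ * conj (g μ)) =
      fun μ => deriv f μ * conj (g μ) + f μ * conj (deriv g μ) :=
    funext fun μ => (hD μ).deriv
  have hi₁ := integrable_mul_conj hf.memLp_deriv hg.memLp
  have hi₂ := integrable_mul_conj hf.memLp hg.memLp_deriv
  refine ⟨fun μ => (hD μ).differentiableAt, integrable_mul_conj hf.memLp hg.memLp,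
    hderiv ▸ hi₁.add hi₂,
    integral_norm_mul_conj_le_of_eLpNorm_le hK hf.memLp hf.eLpNorm_le hg.memLp hg.eLpNorm_le, ?_⟩
  rw [hderiv, two_mul]
  exact (integral_norm_add_le hi₁ hi₂).trans (add_le_add
    (integral_norm_mul_conj_le_of_eLpNorm_le hK hf.memLp_deriv hf.eLpNorm_deriv_le hg.memLp
      hg.eLpNorm_le)
    (integral_norm_mul_conj_le_of_eLpNorm_le hK hf.memLp hf.eLpNorm_le hg.memLp_deriv
      hg.eLpNorm_deriv_le))

section Convergence

variable {α ι : Type*} [MeasurableSpace α] {μ : Measure α} {l : Filter ι}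

theorem tendsto_integral_norm_mul_conj_sub {f g : ι → α → ℂ} {a b : α → ℂ}
    (hf : ∀ᶠ n in l, MemLp (f n) 2 μ) (hg : ∀ᶠ n in l, MemLp (g n) 2 μ)
    (ha : MemLp a 2 μ) (hb : MemLp b 2 μ)
    (hfa : Tendsto (fun n => ∫ x, ‖f n x - a x‖ ^ 2 ∂μ) l (nhds 0))
    (hgb : Tendsto (fun n => ∫ x, ‖g n x - b x‖ ^ 2 ∂μ) l (nhds 0)) :
    Tendsto (fun n => ∫ x, ‖f n x * conj (g n x) - a x * conj (b x)‖ ∂μ) l (nhds 0) := by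
  have hε := hfa.sqrt
  have hδ := hgb.sqrt
  rw [Real.sqrt_zero] at hε hδ
  have hbound := ((hε.mul hδ).add (hε.mul_const √(∫ x, ‖b x‖ ^ 2 ∂μ))).add
    (hδ.const_mul √(∫ x, ‖a x‖ ^ 2 ∂μ))
  rw [mul_zero, zero_mul, mul_zero, add_zero, add_zero] at hbound
  refine squeeze_zero' (Eventually.of_forall fun n => integral_nonneg fun _ => norm_nonneg _) ?_
    hbound
  filter_upwards [hf, hg] with n hfn hgn
  have hd := hfn.sub ha
  have he := hgn.sub hb
  have hsplit (x : α) : f n x * conj (g n x) - a x * conj (b x) =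
      (f n x - a x) * conj (g n x - b x) + (f n x - a x) * conj (b x) +
        a x * conj (g n x - b x) := by
    simp only [map_sub]; ring
  have hX := integrable_mul_conj hd he
  have hY := integrable_mul_conj hd hb
  have hZ := integrable_mul_conj ha he
  simp_rw [hsplit]
  calc _ ≤ (∫ x, ‖(f n x - a x) * conj (g n x - b x)‖ ∂μ +
          ∫ x, ‖(f n x - a x) * conj (b x)‖ ∂μ) + ∫ x, ‖a x * conj (g n x - b x)‖ ∂μ :=
        (integral_norm_add_le (hX.add hY) hZ).trans
          (add_le_add_left (integral_norm_add_le hX hY) _)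
    _ ≤ _ := add_le_add (add_le_add (integral_norm_mul_conj_le hd he)
        (integral_norm_mul_conj_le hd hb)) (integral_norm_mul_conj_le ha he)

end Convergence

theorem tendsto_sq_norm_integral_exp_mul {ι : Type*} {l : Filter ι} {h : ι → ℝ → ℂ} (s : ℝ)
    (hh : Tendsto (fun n => ∫ μ, ‖h n μ‖) l (nhds 0)) :
    Tendsto (fun n => ‖∫ μ : ℝ, exp (I * μ * s) * h n μ‖ ^ 2) l (nhds 0) := by
  have hJ := squeeze_zero (fun _ => norm_nonneg _) (fun n => norm_integral_exp_mul_le (h n) s) hh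
  simpa using hJ.pow 2

theorem measurable_uncurry_mul_conj_comp {B : ℝ → ℝ → ℂ} (hB : Measurable (Function.uncurry B))
    {φ ψ : ℝ → ℝ} (hφ : Measurable φ) (hψ : Measurable ψ) :
    Measurable (Function.uncurry fun s μ => B (φ s) μ * conj (B (ψ s) μ)) :=
  (hB.comp ((hφ.comp measurable_fst).prodMk measurable_snd)).mul <|
    Complex.continuous_conj.measurable.comp <|
      hB.comp ((hψ.comp measurable_fst).prodMk measurable_snd)

theorem aestronglyMeasurable_sq_norm_integral_exp_mul {F : ℝ → ℝ → ℂ}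
    (hF : Measurable (Function.uncurry F)) :
    AEStronglyMeasurable (fun s : ℝ => ‖∫ μ : ℝ, exp (I * μ * s) * F s μ‖ ^ 2) := by
  have hexp : Measurable fun p : ℝ × ℝ => exp (I * p.2 * p.1) := by fun_prop
  have hJ : StronglyMeasurable fun s : ℝ => ∫ μ : ℝ, exp (I * μ * s) * F s μ :=
    (hexp.mul hF).stronglyMeasurable.integral_prod_right'
  exact (hJ.norm.pow 2).aestronglyMeasurable

/-- Analytic core of Theorem 5.2 (convergence of the Wigner–Ville spectrum): under
L²-convergence of the rescaled transfer functions towards the limiting transfer function and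
uniform L²-bounds on the transfer functions and their derivatives, the L²-distance (in `s`)
between the product `A_N⁰ · conj A_N⁰` and `|A(t,·)|²`, measured after taking the inner Fourier
integral in `μ`, tends to zero. -/
theorem wigner_ville_spectrum_core
    (t K : ℝ) (hK : 0 < K)
    (A0 : ℕ → ℝ → ℝ → ℂ) (A : ℝ → ℝ → ℂ)
    (hmeasN : ∀ N : ℕ, Measurable (Function.uncurry (A0 N)))
    (hmeasA : Measurable (Function.uncurry A))
    (hconv_plus : ∀ s : ℝ, Tendsto
      (fun N : ℕ => ∫ μ : ℝ, ‖A0 N ((N : ℝ) * (t + s / (2 * (N : ℝ)))) μ - A t μ‖ ^ 2)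
      atTop (nhds 0))
    (hconv_minus : ∀ s : ℝ, Tendsto
      (fun N : ℕ => ∫ μ : ℝ, ‖A0 N ((N : ℝ) * (t - s / (2 * (N : ℝ)))) μ - A t μ‖ ^ 2)
      atTop (nhds 0))
    (hL2N : ∀ (r : ℝ) (N : ℕ), 1 ≤ N → MemLp (A0 N r) 2 (volume : Measure ℝ) ∧
      eLpNorm (A0 N r) 2 (volume : Measure ℝ) ≤ ENNReal.ofReal K)
    (hL2A : MemLp (A t) 2 (volume : Measure ℝ) ∧
      eLpNorm (A t) 2 (volume : Measure ℝ) ≤ ENNReal.ofReal K)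
    (hdiffN : ∀ (r : ℝ) (N : ℕ), 1 ≤ N → ∀ μ : ℝ, DifferentiableAt ℝ (A0 N r) μ)
    (hderivL2N : ∀ (r : ℝ) (N : ℕ), 1 ≤ N →
      MemLp (deriv (A0 N r)) 2 (volume : Measure ℝ) ∧
        eLpNorm (deriv (A0 N r)) 2 (volume : Measure ℝ) ≤ ENNReal.ofReal K)
    (hdiffA : ∀ μ : ℝ, DifferentiableAt ℝ (A t) μ)
    (hderivL2A : MemLp (deriv (A t)) 2 (volume : Measure ℝ) ∧
      eLpNorm (deriv (A t)) 2 (volume : Measure ℝ) ≤ ENNReal.ofReal K) :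
    Tendsto (fun N : ℕ => ∫ s : ℝ,
      ‖∫ μ : ℝ, Complex.exp (Complex.I * μ * s) *
        (A0 N ((N : ℝ) * (t + s / (2 * (N : ℝ)))) μ *
            (starRingEnd ℂ) (A0 N ((N : ℝ) * (t - s / (2 * (N : ℝ)))) μ) -
          A t μ * (starRingEnd ℂ) (A t μ))‖ ^ 2) atTop (nhds 0) := by
  have hA : IsH1BoundedBy K (A t) := ⟨hL2A.1, hL2A.2, hdiffA, hderivL2A.1, hderivL2A.2⟩
  have hAN : ∀ᶠ N in atTop, ∀ r, IsH1BoundedBy K (A0 N r) :=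
    (eventually_ge_atTop 1).mono fun N hN r => ⟨(hL2N r N hN).1, (hL2N r N hN).2,
      hdiffN r N hN, (hderivL2N r N hN).1, (hderivL2N r N hN).2⟩
  rw [← integral_zero ℝ ℝ]
  refine tendsto_integral_filter_of_dominated_convergence
    (fun s => ((K ^ 2 + K ^ 2) ^ 2 + (2 * K ^ 2 + 2 * K ^ 2) ^ 2) / (1 + s ^ 2)) ?_ ?_ ?_ ?_
  · refine Eventually.of_forall fun N => aestronglyMeasurable_sq_norm_integral_exp_mul ?_
    exact (measurable_uncurry_mul_conj_comp (hmeasN N)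
      (φ := fun s => N * (t + s / (2 * N))) (ψ := fun s => N * (t - s / (2 * N)))
      (by fun_prop) (by fun_prop)).sub
      (measurable_uncurry_mul_conj_comp hmeasA (measurable_const (a := t)) measurable_const)
  · filter_upwards [hAN] with N hN
    refine ae_of_all _ fun s => ?_
    rw [norm_pow, norm_norm]
    exact ((hN _).mul_conj (hN _) hK.le).sub (hA.mul_conj hA hK.le)
      |>.sq_norm_integral_exp_mul_le s
  · simpa only [div_eq_mul_inv] using integrable_inv_one_add_sq.const_mul _
  · refine ae_of_all _ fun s => tendsto_sq_norm_integral_exp_mul s ?_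
    exact tendsto_integral_norm_mul_conj_sub (hAN.mono fun N hN => (hN _).memLp)
      (hAN.mono fun N hN => (hN _).memLp) hL2A.1 hL2A.1 (hconv_plus s) (hconv_minus s)
end

section
/- Let a : ℝ → ℝ be continuous, and suppose that for every T ∈ ℝ there exists ε_T > 0 such that a(s) ≥ ε_T for all s ≤ T. For N ∈ ℕ and t ∈ ℝ define g_N(t, u) = 1_{{u ≥ 0}} · exp( − ∫_{−u}^{0} a(s/N + t) ds ) and g(t, u) = 1_{{u ≥ 0}} · exp( − a(t) · u ). Then: (1) for every t ∈ ℝ, ∫_0^∞ | g_N(t, u) − g(t, u) |² du → 0 as N → ∞; and (2) the map t ↦ g(t, ·) from ℝ to L²(ℝ) is continuous. -/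
/-!
Both parts rest on exponential domination. For `u > 0` the exponents `∫_{-u}^0 a(s/N + t) ds`
and `a(t) u` are at least `ε u`, where `ε` bounds `a` from below on `(-∞, t]`. Hence the squared
difference of the kernels is dominated by `e^{-εu}`. The exponent converges pointwise, by joint
continuity of `(u, ν) ↦ ∫_{-u}^0 a(sν + t) ds` at `ν = 0`, so dominated convergence gives (1).
For (2), the mean value theorem gives `|e^{-bu} - e^{-cu}| ≤ |b - c| u e^{-εu}` for `b, c ≥ ε`,
and `u e^{-εu}` is square integrable on `[0, ∞)`. So `c ↦ 1_{u ≥ 0} e^{-cu}` is locally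
Lipschitz into `L²` on `(0, ∞)`, and is composed with the continuous `a`.
-/

open MeasureTheory Filter intervalIntegral Set Real Topology

section Exponent

variable {a : ℝ → ℝ}

theorem continuous_intervalIntegral_comp_mul_add (ha : Continuous a) (t : ℝ) :
    Continuous fun p : ℝ × ℝ => ∫ s in (-p.1)..0, a (s * p.2 + t) := by
  simp_rw [integral_symm 0 (-_)]
  exact (continuous_parametric_intervalIntegral_of_continuous (μ := volume)
    (f := fun p s => a (s * p.2 + t)) (by fun_prop) continuous_fst.neg).neg

theorem continuous_intervalIntegral_comp_div_add (ha : Continuous a) (t c : ℝ) :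
    Continuous fun u => ∫ s in (-u)..0, a (s / c + t) := by
  simpa [div_eq_mul_inv, Function.comp_def] using
    (continuous_intervalIntegral_comp_mul_add ha t).comp
      (continuous_id.prodMk (continuous_const (y := c⁻¹)))

theorem tendsto_intervalIntegral_comp_div_add (ha : Continuous a) (t u : ℝ) :
    Tendsto (fun N : ℕ => ∫ s in (-u)..0, a (s / N + t)) atTop (𝓝 (a t * u)) := by
  have h := ((continuous_intervalIntegral_comp_mul_add ha t).tendsto (u, 0)).comp
    (tendsto_const_nhds.prodMk_nhds tendsto_inv_atTop_nhds_zero_nat)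
  simpa [div_eq_mul_inv, mul_comm, Function.comp_def] using h

theorem mul_le_intervalIntegral_comp_div_add {ε t u : ℝ} (ha : Continuous a)
    (hεa : ∀ s ≤ t, ε ≤ a s) (N : ℕ) (hu : 0 ≤ u) :
    ε * u ≤ ∫ s in (-u)..0, a (s / N + t) := by
  calc ε * u = ∫ _ in (-u)..(0 : ℝ), ε := by simp [mul_comm]
    _ ≤ _ := integral_mono_on (by linarith) intervalIntegrable_const
        ((ha.comp (by fun_prop)).intervalIntegrable _ _) fun s hs =>
          hεa _ (by linarith [div_nonpos_of_nonpos_of_nonneg hs.2 N.cast_nonneg])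

end Exponent

theorem sq_exp_neg_sub_exp_neg_le {m x y : ℝ} (hm : 0 ≤ m) (hx : m ≤ x) (hy : m ≤ y) :
    (exp (-x) - exp (-y)) ^ 2 ≤ exp (-m) := by
  have hX := exp_le_exp.2 (neg_le_neg hx)
  have hY := exp_le_exp.2 (neg_le_neg hy)
  have h1 : exp (-m) ≤ 1 := exp_le_one_iff.2 (by linarith)
  nlinarith [exp_pos (-x), exp_pos (-y)]

theorem tendsto_setIntegral_Ioi_sq_exp_neg_sub {ι : Type*} {l : Filter ι}
    [l.IsCountablyGenerated] {φ : ι → ℝ → ℝ} {c ε : ℝ} (hε : 0 < ε) (hc : ε ≤ c)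
    (hφ : ∀ i, Measurable (φ i)) (hlow : ∀ i, ∀ u > 0, ε * u ≤ φ i u)
    (hlim : ∀ u > 0, Tendsto (fun i => φ i u) l (𝓝 (c * u))) :
    Tendsto (fun i => ∫ u in Ioi 0, (exp (-φ i u) - exp (-(c * u))) ^ 2) l (𝓝 0) := by
  have hmeas (i : ι) : Measurable fun u => (exp (-φ i u) - exp (-(c * u))) ^ 2 := by
    fun_prop
  suffices Tendsto (fun i => ∫ u in Ioi 0, (exp (-φ i u) - exp (-(c * u))) ^ 2) l
      (𝓝 (∫ _ in Ioi (0 : ℝ), (0 : ℝ))) by simpa using this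
  refine MeasureTheory.tendsto_integral_filter_of_dominated_convergence (fun u => exp (-ε * u))
    (Eventually.of_forall fun i => (hmeas i).aestronglyMeasurable)
    (Eventually.of_forall fun i => (ae_restrict_iff' measurableSet_Ioi).2 <|
      Eventually.of_forall fun u hu => ?_)
    (exp_neg_integrableOn_Ioi 0 hε) ((ae_restrict_iff' measurableSet_Ioi).2 <|
      Eventually.of_forall fun u hu => ?_)
  · rw [Real.norm_of_nonneg (sq_nonneg _), neg_mul]
    exact sq_exp_neg_sub_exp_neg_le (mul_pos hε hu).le (hlow i u hu)
      (mul_le_mul_of_nonneg_right hc (le_of_lt hu))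
  · simpa using (((continuous_exp.tendsto _).comp (hlim u hu).neg).sub_const
      (exp (-(c * u)))).pow 2

theorem abs_exp_neg_mul_sub_exp_neg_mul_le {ε b c u : ℝ} (hu : 0 ≤ u) (hb : ε ≤ b)
    (hc : ε ≤ c) : |exp (-(b * u)) - exp (-(c * u))| ≤ |b - c| * (u * exp (-(ε * u))) := by
  have hderiv : ∀ x ∈ Ici ε, HasDerivWithinAt (fun x => exp (-(x * u)))
      (exp (-(x * u)) * -u) (Ici ε) x := fun x _ =>
    ((hasDerivAt_mul_const u).neg.exp).hasDerivWithinAt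
  have hbound : ∀ x ∈ Ici ε, ‖exp (-(x * u)) * -u‖ ≤ u * exp (-(ε * u)) := by
    intro x hx
    rw [norm_mul, norm_neg, Real.norm_of_nonneg (exp_pos _).le, Real.norm_of_nonneg hu,
      mul_comm]
    exact mul_le_mul_of_nonneg_left
      (exp_le_exp.2 (neg_le_neg (mul_le_mul_of_nonneg_right hx hu))) hu
  simpa [Real.norm_eq_abs, mul_comm] using
    (convex_Ici ε).norm_image_sub_le_of_norm_hasDerivWithin_le hderiv hbound hc hb

theorem memLp_mul_exp_neg_mul_Ici {ε : ℝ} (hε : 0 < ε) :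
    MemLp (fun u => u * exp (-(ε * u))) 2 (volume.restrict (Ici 0)) := by
  refine (memLp_two_iff_integrable_sq (by fun_prop)).2 ?_
  rw [← IntegrableOn, integrableOn_Ici_iff_integrableOn_Ioi]
  refine (integrableOn_rpow_mul_exp_neg_mul_rpow (s := 2) (p := 1) (by norm_num) one_pos
    (mul_pos two_pos hε)).congr_fun (fun u _ => ?_) measurableSet_Ioi
  dsimp only
  rw [rpow_two, rpow_one, mul_pow, ← exp_nat_mul]
  ring_nf

noncomputable def expKernel (c : ℝ) : ℝ → ℝ := (Ici 0).indicator fun u => exp (-(c * u))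

theorem tendsto_eLpNorm_expKernel_sub {c : ℝ} (hc : 0 < c) :
    Tendsto (fun c' => eLpNorm (expKernel c' - expKernel c) 2 volume) (𝓝 c) (𝓝 0) := by
  set M := eLpNorm (fun u => u * exp (-(c / 2 * u))) 2 (volume.restrict (Ici 0))
  have hbound : ∀ᶠ c' in 𝓝 c,
      eLpNorm (expKernel c' - expKernel c) 2 volume ≤ ENNReal.ofReal |c' - c| * M := by
    filter_upwards [Ioi_mem_nhds (half_lt_self hc)] with c' hc'
    rw [expKernel, expKernel, ← indicator_sub',
      eLpNorm_indicator_eq_eLpNorm_restrict measurableSet_Ici]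
    refine eLpNorm_le_mul_eLpNorm_of_ae_le_mul ((ae_restrict_iff' measurableSet_Ici).2 <|
      Eventually.of_forall fun u hu => ?_) 2
    rw [Pi.sub_apply, Real.norm_eq_abs, Real.norm_of_nonneg (mul_nonneg hu (exp_pos _).le)]
    exact abs_exp_neg_mul_sub_exp_neg_mul_le hu (le_of_lt hc') (half_lt_self hc).le
  have hlim : Tendsto (fun c' => ENNReal.ofReal |c' - c| * M) (𝓝 c) (𝓝 0) := by
    simpa using ENNReal.Tendsto.mul_const
      ((ENNReal.continuous_ofReal.comp (by fun_prop : Continuous fun c' => |c' - c|)).tendsto c)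
      (Or.inr (memLp_mul_exp_neg_mul_Ici (half_pos hc)).eLpNorm_ne_top)
  exact tendsto_of_tendsto_of_tendsto_of_le_of_le' tendsto_const_nhds hlim
    (Eventually.of_forall fun _ => zero_le) hbound

/-- Proposition 4.1: local stationarity of time-varying CAR(1) kernels. If `a` is continuous
and bounded below by a positive constant on every left half-line, then the kernels
`g_N(t,u) = 1_{u ≥ 0} exp(−∫_{−u}^0 a(s/N + t) ds)` converge in `L²` to the limiting kernel
`g(t,u) = 1_{u ≥ 0} e^{−a(t)u}`, and `t ↦ g(t,·)` is `L²`-continuous. -/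
theorem tvCAR1_locally_stationary
    (a : ℝ → ℝ) (ha : Continuous a)
    (hpos : ∀ T : ℝ, ∃ ε > (0 : ℝ), ∀ s ≤ T, ε ≤ a s)
    (gN : ℕ → ℝ → ℝ → ℝ) (g : ℝ → ℝ → ℝ)
    (hgN : ∀ (N : ℕ) (t u : ℝ),
      gN N t u = if 0 ≤ u then Real.exp (-∫ s in (-u)..(0 : ℝ), a (s / N + t)) else 0)
    (hg : ∀ t u : ℝ, g t u = if 0 ≤ u then Real.exp (-(a t * u)) else 0) :
    (∀ t : ℝ, Tendsto (fun N : ℕ => ∫ u in Set.Ioi (0 : ℝ), (gN N t u - g t u) ^ 2)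
        atTop (nhds 0)) ∧
      ∀ t : ℝ, Tendsto (fun t' => eLpNorm (fun u => g t' u - g t u) 2 (volume : Measure ℝ))
        (nhds t) (nhds 0) := by
  refine ⟨fun t => ?_, fun t => ?_⟩ <;> obtain ⟨ε, hε, hεa⟩ := hpos t
  · refine (tendsto_setIntegral_Ioi_sq_exp_neg_sub (l := atTop) hε (hεa t le_rfl)
      (fun N : ℕ => (continuous_intervalIntegral_comp_div_add ha t N).measurable)
      (fun N u hu => mul_le_intervalIntegral_comp_div_add ha hεa N hu.le)
      (fun u _ => tendsto_intervalIntegral_comp_div_add ha t u)).congr fun N => ?_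
    exact setIntegral_congr_fun measurableSet_Ioi fun u hu => by
      simp [hgN, hg, le_of_lt (mem_Ioi.1 hu)]
  · have hg' : g = fun t => expKernel (a t) := by
      ext t u
      simp [hg, expKernel, indicator]
    subst hg'
    exact (tendsto_eLpNorm_expKernel_sub (hε.trans_le (hεa t le_rfl))).comp (ha.tendsto t)
end

section
/- Let p ≥ 1 and let A : ℝ → M_{p×p}(ℝ), B : ℝ → ℝ^p, C : ℝ → ℝ^p be continuous with sup_{s∈ℝ} ‖C(s)‖ < ∞. Fix t ∈ ℝ. For each N ∈ ℕ and each u ≤ 0, let Ψ_{N,t}(0, u) ∈ M_{p×p}(ℝ) denote the value at time 0 of the unique solution s ↦ Ψ(s) on [u, 0] of the linear matrix ODE Ψ(u) = I_p, dΨ/ds (s) = A(s/N + t) · Ψ(s). Assume there exists a function F_t ∈ L²((−∞, 0]) such that ‖Ψ_{N,t}(0, u)‖ ≤ F_t(u) for all N ∈ ℕ and all u ≤ 0. Then ∫_0^∞ | B(t)ᵀ · Ψ_{N,t}(0, −v) · C(−v/N + t) − B(t)ᵀ · exp(v · A(t)) · C(t) |² dv → 0 as N → ∞, where exp denotes the matrix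 exponential. -/
open Matrix Filter MeasureTheory NormedSpace

/-!
On `[u, 0]` the rescaled coefficient `s ↦ A (s / N + t)` converges uniformly to the constant
`A t`, so Grönwall's inequality compares the transition matrix `Ψ_{N,t}(0, u)` with the
frozen-coefficient one, `e^{-u A(t)}`: the kernels converge pointwise. The same inequality makes
`u ↦ Ψ_{N,t}(0, u)` locally Lipschitz, so the kernels are measurable, and the domination by `F_t`
together with the boundedness of `C` turns pointwise convergence into `L²` convergence by
dominated convergence.
-/

open Set Topology

section LinearODE

variable {𝔸 : Type*} [NormedRing 𝔸] [NormedSpace ℝ 𝔸]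

theorem norm_sub_le_gronwallBound_of_hasDerivAt_mul {g₁ g₂ c₁ c₂ : ℝ → 𝔸} {a b K ε G δ : ℝ}
    (h₁ : ∀ s ∈ Icc a b, HasDerivAt g₁ (c₁ s * g₁ s) s)
    (h₂ : ∀ s ∈ Icc a b, HasDerivAt g₂ (c₂ s * g₂ s) s)
    (hK : ∀ s ∈ Icc a b, ‖c₁ s‖ ≤ K) (hG : ∀ s ∈ Icc a b, ‖g₂ s‖ ≤ G)
    (hc : ∀ s ∈ Icc a b, ‖c₁ s - c₂ s‖ ≤ ε) (hδ : ‖g₁ a - g₂ a‖ ≤ δ) :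
    ∀ x ∈ Icc a b, ‖g₁ x - g₂ x‖ ≤ gronwallBound δ K (ε * G) (x - a) := by
  refine norm_le_gronwallBound_of_norm_deriv_right_le
    (fun s hs => ((h₁ s hs).sub (h₂ s hs)).continuousAt.continuousWithinAt)
    (fun s hs => ((h₁ s (Ico_subset_Icc_self hs)).sub
      (h₂ s (Ico_subset_Icc_self hs))).hasDerivWithinAt) hδ fun s hs => ?_
  replace hs := Ico_subset_Icc_self hs
  calc ‖c₁ s * g₁ s - c₂ s * g₂ s‖
      = ‖c₁ s * (g₁ s - g₂ s) + (c₁ s - c₂ s) * g₂ s‖ := by noncomm_ring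
    _ ≤ ‖c₁ s‖ * ‖g₁ s - g₂ s‖ + ‖c₁ s - c₂ s‖ * ‖g₂ s‖ :=
        (norm_add_le _ _).trans (add_le_add (norm_mul_le _ _) (norm_mul_le _ _))
    _ ≤ K * ‖g₁ s - g₂ s‖ + ε * G := by
        gcongr
        · exact hK s hs
        · exact (norm_nonneg _).trans (hc s hs)
        · exact hc s hs
        · exact hG s hs

theorem norm_le_of_hasDerivAt_mul {g c : ℝ → 𝔸} {a b K : ℝ}
    (h : ∀ s ∈ Icc a b, HasDerivAt g (c s * g s) s) (hK : ∀ s ∈ Icc a b, ‖c s‖ ≤ K) :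
    ∀ x ∈ Icc a b, ‖g x‖ ≤ ‖g a‖ * Real.exp (K * (x - a)) := by
  intro x hx
  have hzero : ∀ s ∈ Icc a b, HasDerivAt (fun _ => (0 : 𝔸)) (0 * 0) s := fun s _ => by
    simpa using hasDerivAt_const s (0 : 𝔸)
  simpa [gronwallBound_ε0] using norm_sub_le_gronwallBound_of_hasDerivAt_mul (G := 0) h hzero hK
    (by simp) (by simpa using hK) (by simp) x hx

def IsTransition (c : ℝ → 𝔸) (u b : ℝ) (M : 𝔸) : Prop :=
  ∃ g : ℝ → 𝔸, g u = 1 ∧ (∀ s ∈ Icc u b, HasDerivAt g (c s * g s) s) ∧ M = g b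

theorem IsTransition.norm_sub_le {c : ℝ → 𝔸} {a b u w K : ℝ} {M M' : 𝔸}
    (hK : ∀ s ∈ Icc a b, ‖c s‖ ≤ K) (hM : IsTransition c w b M) (hM' : IsTransition c u b M')
    (haw : a ≤ w) (hwu : w ≤ u) (hub : u ≤ b) :
    ‖M' - M‖ ≤ K * ‖(1 : 𝔸)‖ * Real.exp (K * (b - a)) ^ 2 * (u - w) := by
  obtain ⟨g, hg₁, hg, rfl⟩ := hM
  obtain ⟨h, hh₁, hh, rfl⟩ := hM'
  have hK₀ : 0 ≤ K := (norm_nonneg _).trans (hK b ⟨haw.trans (hwu.trans hub), le_rfl⟩)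
  have hKw : ∀ s ∈ Icc w b, ‖c s‖ ≤ K := fun s hs => hK s ⟨haw.trans hs.1, hs.2⟩
  set E := Real.exp (K * (b - a))
  have hE : ∀ s ∈ Icc w b, Real.exp (K * (s - w)) ≤ E := fun s hs =>
    Real.exp_le_exp.2 (mul_le_mul_of_nonneg_left (by linarith [hs.2]) hK₀)
  have hgG : ∀ s ∈ Icc w b, ‖g s‖ ≤ ‖(1 : 𝔸)‖ * E := fun s hs => by
    simpa [hg₁] using (norm_le_of_hasDerivAt_mul hg hKw s hs).trans
      (mul_le_mul_of_nonneg_left (hE s hs) (norm_nonneg _))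
  have hstart : ‖h u - g u‖ ≤ K * (‖(1 : 𝔸)‖ * E) * (u - w) := by
    have := (convex_Icc w b).norm_image_sub_le_of_norm_hasDerivWithin_le
      (fun s hs => (hg s hs).hasDerivWithinAt) (fun s hs => (norm_mul_le _ _).trans
        (mul_le_mul (hKw s hs) (hgG s hs) (norm_nonneg _) hK₀))
      (left_mem_Icc.2 (hwu.trans hub)) ⟨hwu, hub⟩
    rw [hh₁, norm_sub_rev]
    rwa [hg₁, Real.norm_of_nonneg (sub_nonneg.2 hwu)] at this
  have hsub : Icc u b ⊆ Icc w b := Icc_subset_Icc_left hwu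
  have := norm_sub_le_gronwallBound_of_hasDerivAt_mul (ε := 0) hh (fun s hs => hg s (hsub hs))
    (fun s hs => hKw s (hsub hs)) (fun s hs => hgG s (hsub hs)) (by simp) hstart b ⟨hub, le_rfl⟩
  rw [zero_mul, gronwallBound_ε0] at this
  refine this.trans ?_
  calc K * (‖(1 : 𝔸)‖ * E) * (u - w) * Real.exp (K * (b - u))
      ≤ K * (‖(1 : 𝔸)‖ * E) * (u - w) * E := by
        have : 0 ≤ u - w := by linarith
        gcongr
        exact Real.exp_le_exp.2 (mul_le_mul_of_nonneg_left (by linarith) hK₀)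
    _ = K * ‖(1 : 𝔸)‖ * E ^ 2 * (u - w) := by ring

theorem continuousOn_of_isTransition {c : ℝ → 𝔸} {b : ℝ} {P : ℝ → 𝔸}
    (hc : ContinuousOn c (Iic b)) (hP : ∀ u ≤ b, IsTransition c u b (P u)) :
    ContinuousOn P (Iic b) := by
  intro u₀ hu₀
  obtain ⟨K, hK⟩ := isCompact_Icc.exists_bound_of_continuousOn
    (hc.mono (Icc_subset_Iic_self (a := u₀ - 1)))
  have hLip : LipschitzOnWith (K * ‖(1 : 𝔸)‖ * Real.exp (K * (b - (u₀ - 1))) ^ 2).toNNReal P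
      (Icc (u₀ - 1) b) := by
    refine LipschitzOnWith.of_dist_le' fun x hx y hy => ?_
    rcases le_total x y with hxy | hyx
    · rw [dist_comm, dist_eq_norm, Real.dist_eq, abs_of_nonpos (by linarith), neg_sub]
      exact (hP x hx.2).norm_sub_le hK (hP y hy.2) hx.1 hxy hy.2
    · rw [dist_eq_norm, Real.dist_eq, abs_of_nonneg (by linarith)]
      exact (hP y hy.2).norm_sub_le hK (hP x hx.2) hy.1 hyx hx.2
  have hu₀' : u₀ ∈ Icc (u₀ - 1) b := ⟨by linarith, hu₀⟩
  exact (hLip.continuousOn u₀ hu₀').mono_of_mem_nhdsWithin <| mem_nhdsWithin.2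
    ⟨Ioi (u₀ - 1), isOpen_Ioi, show u₀ - 1 < u₀ by linarith, fun x hx => ⟨hx.1.le, hx.2⟩⟩

end LinearODE

theorem tendstoUniformlyOn_comp_div_natCast_add {X : Type*} [UniformSpace X] {a : ℝ → X} {t : ℝ}
    (ha : ContinuousAt a t) {S : Set ℝ} (hS : Bornology.IsBounded S) :
    TendstoUniformlyOn (fun (N : ℕ) s => a (s / N + t)) (fun _ => a t) atTop S := by
  refine tendsto_prod_principal_iff.1 (ha.tendsto.comp ?_)
  have hinv : Tendsto (fun q : ℕ × ℝ => ((q.1 : ℝ))⁻¹) (atTop ×ˢ 𝓟 S) (𝓝 0) :=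
    (tendsto_inv_atTop_zero.comp tendsto_natCast_atTop_atTop).comp tendsto_fst
  have hbdd : IsBoundedUnder (· ≤ ·) (atTop ×ˢ 𝓟 S) (fun q : ℕ × ℝ => ‖q.2‖) := by
    obtain ⟨R, hR⟩ := hS.exists_norm_le
    exact ⟨R, eventually_map.2 (mem_prod_principal.2 (univ_mem' fun _ s hs => hR s hs))⟩
  simpa [div_eq_inv_mul] using (hinv.zero_mul_isBoundedUnder_le hbdd).add_const t

section FrozenCoefficient

variable {𝔸 : Type*} [NormedRing 𝔸] [NormedAlgebra ℝ 𝔸] [CompleteSpace 𝔸]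

theorem isTransition_exp (α : 𝔸) (u b : ℝ) :
    IsTransition (fun _ => α) u b (exp ((b - u) • α)) := by
  refine ⟨fun s => exp ((s - u) • α), by simp, fun s _ => ?_, rfl⟩
  simpa [Function.comp_def] using
    (hasDerivAt_exp_smul_const' α (s - u)).scomp s ((hasDerivAt_id s).sub_const u)

theorem tendsto_exp_of_isTransition_of_tendstoUniformlyOn {ι : Type*} {l : Filter ι}
    {c : ι → ℝ → 𝔸} {α : 𝔸} {u b : ℝ} {M : ι → 𝔸} (hub : u ≤ b)
    (hc : TendstoUniformlyOn c (fun _ => α) l (Icc u b))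
    (hM : ∀ᶠ n in l, IsTransition (c n) u b (M n)) :
    Tendsto M l (𝓝 (exp ((b - u) • α))) := by
  obtain ⟨Φ, hΦ₁, hΦ, hΦb⟩ := isTransition_exp α u b
  set K := ‖α‖ + 1
  set G := ‖(1 : 𝔸)‖ * Real.exp (K * (b - u))
  have hΦG : ∀ s ∈ Icc u b, ‖Φ s‖ ≤ G := fun s hs => by
    refine (norm_le_of_hasDerivAt_mul hΦ (fun _ _ => le_add_of_nonneg_right zero_le_one) s hs).trans
      ?_
    rw [hΦ₁]
    exact mul_le_mul_of_nonneg_left (Real.exp_le_exp.2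
      (mul_le_mul_of_nonneg_left (by linarith [hs.2]) (by positivity))) (norm_nonneg _)
  have key : ∀ ε ∈ Ioo (0 : ℝ) 1, ∀ᶠ n in l,
      ‖M n - exp ((b - u) • α)‖ ≤ gronwallBound 0 K (ε * G) (b - u) := by
    intro ε hε
    filter_upwards [hM, Metric.tendstoUniformlyOn_iff.1 hc ε hε.1] with n ⟨g, hg₁, hg, hgb⟩ hclose
    have hcα : ∀ s ∈ Icc u b, ‖c n s - α‖ ≤ ε := fun s hs => by
      rw [← dist_eq_norm, dist_comm]; exact (hclose s hs).le
    have hcK : ∀ s ∈ Icc u b, ‖c n s‖ ≤ K := fun s hs => by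
      linarith [norm_sub_norm_le (c n s) α, hcα s hs, hε.2]
    rw [hgb, hΦb]
    exact norm_sub_le_gronwallBound_of_hasDerivAt_mul hg hΦ hcK hΦG hcα (by simp [hg₁, hΦ₁])
      b ⟨hub, le_rfl⟩
  have hbound : Tendsto (fun ε => gronwallBound 0 K (ε * G) (b - u)) (𝓝[>] 0) (𝓝 0) := by
    simpa [Function.comp_def, gronwallBound_ε0_δ0] using
      ((gronwallBound_continuous_ε 0 K (b - u)).comp (continuous_mul_const G)).continuousAt
        (x := 0) |>.tendsto.mono_left nhdsWithin_le_nhds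
  refine tendsto_iff_norm_sub_tendsto_zero.2 (Metric.tendsto_nhds.2 fun δ hδ => ?_)
  obtain ⟨ε, hεδ, hε⟩ := ((hbound.eventually (gt_mem_nhds hδ)).and (Ioo_mem_nhdsGT one_pos)).exists
  filter_upwards [key ε hε] with n hn
  rw [Real.dist_0_eq_abs, abs_norm]
  exact hn.trans_lt hεδ

theorem tendsto_exp_of_isTransition_rescaled {a : ℝ → 𝔸} {t u : ℝ} (ha : ContinuousAt a t)
    (hu : u ≤ 0) {M : ℕ → 𝔸}
    (hM : ∀ᶠ N : ℕ in atTop, IsTransition (fun s => a (s / N + t)) u 0 (M N)) :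
    Tendsto M atTop (𝓝 (exp ((-u) • a t))) := by
  simpa using tendsto_exp_of_isTransition_of_tendstoUniformlyOn hu
    (tendstoUniformlyOn_comp_div_natCast_add ha (Metric.isBounded_Icc u 0)) hM

end FrozenCoefficient

theorem tendsto_integral_sq_sub_of_dominated {α : Type*} [MeasurableSpace α] {μ : Measure α}
    {F : ℕ → α → ℝ} {f G : α → ℝ}
    (hG : Integrable (fun x => G x ^ 2) μ) (hF : ∀ n, AEStronglyMeasurable (F n) μ)
    (hFG : ∀ n, ∀ᵐ x ∂μ, |F n x| ≤ G x)
    (hlim : ∀ᵐ x ∂μ, Tendsto (fun n => F n x) atTop (𝓝 (f x))) :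
    Tendsto (fun n => ∫ x, (F n x - f x) ^ 2 ∂μ) atTop (𝓝 0) := by
  have hf : AEStronglyMeasurable f μ := aestronglyMeasurable_of_tendsto_ae atTop hF hlim
  have hFG' : ∀ᵐ x ∂μ, ∀ n, |F n x| ≤ G x := ae_all_iff.2 hFG
  have hfG : ∀ᵐ x ∂μ, |f x| ≤ G x := by
    filter_upwards [hlim, hFG'] with x hx hxG
    exact le_of_tendsto' hx.abs hxG
  have hsq : ∀ᵐ x ∂μ, Tendsto (fun n => (F n x - f x) ^ 2) atTop (𝓝 0) := by
    filter_upwards [hlim] with x hx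
    simpa using (hx.sub_const (f x)).pow 2
  have hbound : ∀ n, ∀ᵐ x ∂μ, ‖(F n x - f x) ^ 2‖ ≤ 4 * G x ^ 2 := fun n => by
    filter_upwards [hFG', hfG] with x hxG hfx
    have hsub : |F n x - f x| ≤ 2 * G x := by linarith [abs_sub (F n x) (f x), hxG n]
    rw [Real.norm_eq_abs, abs_pow, show 4 * G x ^ 2 = (2 * G x) ^ 2 by ring]
    exact pow_le_pow_left₀ (abs_nonneg _) hsub 2
  simpa using tendsto_integral_of_dominated_convergence _ (fun n => ((hF n).sub hf).pow 2)
    (hG.const_mul 4) hbound hsq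

section L2Operator

open scoped Matrix.Norms.L2Operator

variable {m n : Type*} [Fintype m] [Fintype n] [DecidableEq n]

theorem Matrix.hasDerivAt_of_hasDerivAt_entry {Ψ : ℝ → Matrix m n ℝ} {D : Matrix m n ℝ} {s : ℝ}
    (h : ∀ i j, HasDerivAt (fun r => Ψ r i j) (D i j) s) : HasDerivAt Ψ D s := by
  let e : (m → n → ℝ) →L[ℝ] Matrix m n ℝ := LinearMap.toContinuousLinearMap LinearMap.id
  exact e.hasFDerivAt.comp_hasDerivAt s (hasDerivAt_pi.2 fun i => hasDerivAt_pi.2 (h i))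

theorem Matrix.isTransition_of_hasDerivAt_entry {c : ℝ → Matrix n n ℝ} {u b : ℝ}
    {Ψ : ℝ → Matrix n n ℝ} (hΨ₁ : Ψ u = 1)
    (hΨ : ∀ s ∈ Icc u b, ∀ i j, HasDerivAt (fun r => Ψ r i j) ((c s * Ψ s) i j) s) :
    IsTransition c u b (Ψ b) :=
  ⟨Ψ, hΨ₁, fun s hs => hasDerivAt_of_hasDerivAt_entry (hΨ s hs), rfl⟩

theorem Matrix.abs_dotProduct_mulVec_le (x : m → ℝ) (M : Matrix m n ℝ) (y : n → ℝ) :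
    |x ⬝ᵥ M *ᵥ y| ≤ ‖WithLp.toLp 2 x‖ * ‖M‖ * ‖WithLp.toLp 2 y‖ := by
  have h : x ⬝ᵥ M *ᵥ y = inner ℝ (WithLp.toLp 2 x) (WithLp.toLp 2 (M *ᵥ y)) := by
    simp [EuclideanSpace.inner_eq_star_dotProduct, dotProduct_comm]
  rw [h, mul_assoc]
  exact (abs_real_inner_le_norm _ _).trans
    (mul_le_mul_of_nonneg_left (M.l2_opNorm_mulVec (WithLp.toLp 2 y)) (norm_nonneg _))

theorem tendsto_integral_sq_dotProduct_mulVec_sub {α : Type*} [MeasurableSpace α]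
    {μ : Measure α} (b : m → ℝ) {Q : ℕ → α → Matrix m n ℝ} {Q₀ : α → Matrix m n ℝ}
    {x : ℕ → α → n → ℝ} {x₀ : α → n → ℝ} {F : α → ℝ} {R : ℝ}
    (hF : Integrable (fun v => F v ^ 2) μ)
    (hQ : ∀ k, AEStronglyMeasurable (Q k) μ) (hx : ∀ k, AEStronglyMeasurable (x k) μ)
    (hQF : ∀ k, ∀ᵐ v ∂μ, ‖Q k v‖ ≤ F v) (hxR : ∀ k v, ‖x k v‖ ≤ R)
    (hQ₀ : ∀ᵐ v ∂μ, Tendsto (fun k => Q k v) atTop (𝓝 (Q₀ v)))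
    (hx₀ : ∀ᵐ v ∂μ, Tendsto (fun k => x k v) atTop (𝓝 (x₀ v))) :
    Tendsto (fun k => ∫ v, (b ⬝ᵥ Q k v *ᵥ x k v - b ⬝ᵥ Q₀ v *ᵥ x₀ v) ^ 2 ∂μ) atTop (𝓝 0) := by
  have hκ : Continuous fun q : Matrix m n ℝ × (n → ℝ) => b ⬝ᵥ q.1 *ᵥ q.2 :=
    continuous_const.dotProduct (continuous_fst.matrix_mulVec continuous_snd)
  set e := ((EuclideanSpace.equiv n ℝ).symm : (n → ℝ) →L[ℝ] EuclideanSpace ℝ n)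
  set K := ‖WithLp.toLp 2 b‖ * (‖e‖ * R)
  refine tendsto_integral_sq_sub_of_dominated (F := fun k v => b ⬝ᵥ Q k v *ᵥ x k v)
    (f := fun v => b ⬝ᵥ Q₀ v *ᵥ x₀ v) (G := fun v => K * F v)
    ((hF.const_mul (K ^ 2)).congr (ae_of_all _ fun v => by ring))
    (fun k => ?_) (fun k => ?_) ?_
  · exact (hκ.comp_aestronglyMeasurable ((hQ k).prodMk (hx k)) :)
  · filter_upwards [hQF k] with v hv
    have hxv : ‖WithLp.toLp 2 (x k v)‖ ≤ ‖e‖ * R :=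
      (e.le_opNorm _).trans (mul_le_mul_of_nonneg_left (hxR k v) (norm_nonneg _))
    calc _ ≤ ‖WithLp.toLp 2 b‖ * ‖Q k v‖ * ‖WithLp.toLp 2 (x k v)‖ :=
          abs_dotProduct_mulVec_le _ _ _
      _ ≤ ‖WithLp.toLp 2 b‖ * F v * (‖e‖ * R) := by
        have := (norm_nonneg _).trans hv
        gcongr
      _ = K * F v := by ring
  · filter_upwards [hQ₀, hx₀] with v hQv hxv
    exact ((hκ.tendsto _).comp (hQv.prodMk_nhds hxv) :)

end L2Operator

theorem tv_state_space_locally_stationary_general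
    (p : ℕ)
    (A : ℝ → Matrix (Fin p) (Fin p) ℝ) (B C : ℝ → Fin p → ℝ)
    (hA : Continuous A) (hC : Continuous C)
    (hCbdd : ∃ M : ℝ, ∀ s : ℝ, ‖C s‖ ≤ M)
    (t : ℝ)
    (P : ℕ → ℝ → Matrix (Fin p) (Fin p) ℝ)
    (hP : ∀ N : ℕ, 1 ≤ N → ∀ u ≤ (0 : ℝ), ∃ Ψ : ℝ → Matrix (Fin p) (Fin p) ℝ,
      Ψ u = 1 ∧
        (∀ s ∈ Set.Icc u (0 : ℝ), ∀ i j : Fin p,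
          HasDerivAt (fun r => Ψ r i j) ((A (s / N + t) * Ψ s) i j) s) ∧
        P N u = Ψ 0)
    (F : ℝ → ℝ)
    (hF : MemLp F 2 ((volume : Measure ℝ).restrict (Set.Iic (0 : ℝ))))
    (hdom : ∀ N : ℕ, 1 ≤ N → ∀ u ≤ (0 : ℝ),
      ‖Matrix.toEuclideanCLM (𝕜 := ℝ) (P N u)‖ ≤ F u) :
    Tendsto (fun N : ℕ => ∫ v in Set.Ioi (0 : ℝ),
        (B t ⬝ᵥ (P N (-v)).mulVec (C (-v / N + t)) -
          B t ⬝ᵥ (exp (v • A t)).mulVec (C t)) ^ 2)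
      atTop (nhds 0) := by
  open Matrix.Norms.L2Operator in
  obtain ⟨R, hR⟩ := hCbdd
  have hP' : ∀ N : ℕ, 1 ≤ N → ∀ u ≤ (0 : ℝ),
      IsTransition (fun s => A (s / N + t)) u 0 (P N u) := fun N hN u hu => by
    obtain ⟨Ψ, hΨ₁, hΨ, hPΨ⟩ := hP N hN u hu
    exact hPΨ ▸ isTransition_of_hasDerivAt_entry hΨ₁ hΨ
  have hF₂ : IntegrableOn (fun v => F v ^ 2) (Iio (-0)) :=
    IntegrableOn.mono_set hF.integrable_sq (by simp)
  refine (tendsto_add_atTop_iff_nat 1).1 (tendsto_integral_sq_dotProduct_mulVec_sub (B t)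
    hF₂.comp_neg_Ioi (fun k => ?_) (fun k => ?_) (fun k => ?_) (fun k v => hR _) ?_ ?_)
  · refine ContinuousOn.aestronglyMeasurable ?_ measurableSet_Ioi
    exact (continuousOn_of_isTransition (by fun_prop) (hP' (k + 1) (by simp))).comp
      continuousOn_neg fun v hv => by simpa using (mem_Ioi.1 hv).le
  · exact (by fun_prop : Continuous fun v : ℝ => C (-v / (k + 1 : ℕ) + t)).aestronglyMeasurable
  -- `‖toEuclideanCLM M‖` is by definition the L² operator norm `‖M‖`.
  · exact (ae_restrict_iff' measurableSet_Ioi).2 (ae_of_all _ fun v hv =>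
      hdom (k + 1) (by simp) (-v) (by linarith [mem_Ioi.1 hv]))
  · refine (ae_restrict_iff' measurableSet_Ioi).2 (ae_of_all _ fun v hv => ?_)
    have hv' : -v ≤ 0 := by linarith [mem_Ioi.1 hv]
    simpa [Function.comp_def] using (tendsto_exp_of_isTransition_rescaled hA.continuousAt hv'
      ((eventually_ge_atTop 1).mono fun N hN => hP' N hN (-v) hv')).comp (tendsto_add_atTop_nat 1)
  · refine ae_of_all _ fun v => (hC.tendsto t).comp ?_
    simpa using ((tendsto_const_div_atTop_nhds_zero_nat (-v)).comp
      (tendsto_add_atTop_nat 1)).add_const t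

/-- Proposition 4.12 (analytic content): under continuity of the coefficients, boundedness of
`C`, and a uniform `L²` domination of the transition matrices `Ψ_{N,t}(0,u)`, the kernels of
the time-varying state space process converge in `L²` to the frozen-coefficient kernel
`v ↦ B(t)ᵀ e^{vA(t)} C(t)`. -/
theorem tv_state_space_locally_stationary
    (p : ℕ) (hp : 1 ≤ p)
    (A : ℝ → Matrix (Fin p) (Fin p) ℝ) (B C : ℝ → Fin p → ℝ)
    (hA : Continuous A) (hB : Continuous B) (hC : Continuous C)
    (hCbdd : ∃ M : ℝ, ∀ s : ℝ, ‖C s‖ ≤ M)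
    (t : ℝ)
    (P : ℕ → ℝ → Matrix (Fin p) (Fin p) ℝ)
    (hP : ∀ N : ℕ, 1 ≤ N → ∀ u ≤ (0 : ℝ), ∃ Ψ : ℝ → Matrix (Fin p) (Fin p) ℝ,
      Ψ u = 1 ∧
        (∀ s ∈ Set.Icc u (0 : ℝ), ∀ i j : Fin p,
          HasDerivAt (fun r => Ψ r i j) ((A (s / N + t) * Ψ s) i j) s) ∧
        P N u = Ψ 0)
    (F : ℝ → ℝ)
    (hF : MemLp F 2 ((volume : Measure ℝ).restrict (Set.Iic (0 : ℝ))))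
    (hdom : ∀ N : ℕ, 1 ≤ N → ∀ u ≤ (0 : ℝ),
      ‖Matrix.toEuclideanCLM (𝕜 := ℝ) (P N u)‖ ≤ F u) :
    Tendsto (fun N : ℕ => ∫ v in Set.Ioi (0 : ℝ),
        (B t ⬝ᵥ (P N (-v)).mulVec (C (-v / N + t)) -
          B t ⬝ᵥ (exp (v • A t)).mulVec (C t)) ^ 2)
      atTop (nhds 0) :=
  tv_state_space_locally_stationary_general p A B C hA hC hCbdd t P hP F hF hdom
end

section
/- Let p ≥ 1, s₀ ∈ ℝ, and let A : ℝ → M_{p×p}(ℝ) be continuous. Let Ψ : [s₀, ∞) → M_{p×p}(ℝ) satisfy Ψ(s₀) = I_p and dΨ/ds (s) = A(s) Ψ(s) for all s ≥ s₀. Suppose ℓ : ℝ → ℝ is a locally integrable function such that ⟨x, (A(ν) + A(ν)ᵀ) x⟩ ≤ ℓ(ν) ‖x‖² for all x ∈ ℝ^p and all ν ≥ s₀ (i.e. ℓ(ν) dominates the largest eigenvalue of A(ν) + A(ν)ᵀ), and suppose there are constants λ > 0 and γ > 0 with ∫_{s₀}^{s} ℓ(ν) dν ≤ −λ(s − s₀)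 + γ for all s ≥ s₀. Then ‖Ψ(s)‖ ≤ e^{γ/2} · e^{−(λ/2)(s − s₀)} for all s ≥ s₀, where ‖·‖ is the operator norm induced by the Euclidean norm. -/
/-!
For a solution `v` of `v' = A(r) v`, the derivative of `‖v‖²` is `⟪v, (A + Aᵀ) v⟫`, which is at most
`λ_max(r) ‖v‖²` with `λ_max(r)` the largest eigenvalue of `A(r) + A(r)ᵀ`. Since `λ_max` is
continuous, `‖v(r)‖² exp(-∫_{s₀}^r λ_max)` is nonincreasing, so
`‖v(s)‖² ≤ ‖v(s₀)‖² exp(∫_{s₀}^s λ_max) ≤ ‖v(s₀)‖² exp(∫_{s₀}^s ℓ) ≤ ‖v(s₀)‖² e^{γ - λ(s - s₀)}`.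
-/

open Matrix Filter intervalIntegral MeasureTheory

open Metric Set
open scoped RealInnerProductSpace

namespace ContinuousLinearMap

variable {E : Type*} [NormedAddCommGroup E] [InnerProductSpace ℝ E]

/-- For `T = toEuclideanCLM A` this is the largest eigenvalue of `(A + Aᵀ) / 2`. -/
noncomputable def rayleighSup (T : E →L[ℝ] E) : ℝ :=
  sSup ((fun x => ⟪x, T x⟫) '' sphere 0 1)

lemma bddAbove_inner_self_image_sphere (T : E →L[ℝ] E) :
    BddAbove ((fun x => ⟪x, T x⟫) '' sphere 0 1) := by
  refine ⟨‖T‖, ?_⟩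
  rintro _ ⟨x, hx, rfl⟩
  rw [mem_sphere_zero_iff_norm] at hx
  calc ⟪x, T x⟫ ≤ ‖x‖ * ‖T x‖ := real_inner_le_norm _ _
    _ ≤ ‖x‖ * (‖T‖ * ‖x‖) := by gcongr; exact T.le_opNorm x
    _ = ‖T‖ := by rw [hx, one_mul, mul_one]

lemma inner_le_rayleighSup_mul_norm_sq (T : E →L[ℝ] E) (x : E) :
    ⟪x, T x⟫ ≤ T.rayleighSup * ‖x‖ ^ 2 := by
  rcases eq_or_ne x 0 with rfl | hx
  · simp
  have hx' : 0 < ‖x‖ := norm_pos_iff.2 hx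
  have hunit : ‖x‖⁻¹ • x ∈ sphere (0 : E) 1 := by
    rw [mem_sphere_zero_iff_norm, norm_smul, norm_inv, norm_norm, inv_mul_cancel₀ hx'.ne']
  have hle := le_csSup T.bddAbove_inner_self_image_sphere ⟨_, hunit, rfl⟩
  simp only [map_smul, inner_smul_left, inner_smul_right, conj_trivial] at hle
  rw [← div_le_iff₀ (by positivity)]
  calc ⟪x, T x⟫ / ‖x‖ ^ 2 = ‖x‖⁻¹ * (‖x‖⁻¹ * ⟪x, T x⟫) := by field_simp
    _ ≤ T.rayleighSup := hle

lemma rayleighSup_le [Nontrivial E] (T : E →L[ℝ] E) {c : ℝ}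
    (h : ∀ x, ⟪x, T x⟫ ≤ c * ‖x‖ ^ 2) : T.rayleighSup ≤ c := by
  refine csSup_le ((NormedSpace.sphere_nonempty.2 zero_le_one).image _) ?_
  rintro _ ⟨x, hx, rfl⟩
  simpa [mem_sphere_zero_iff_norm.1 hx] using h x

lemma continuous_rayleighSup [ProperSpace E] {X : Type*} [TopologicalSpace X]
    {T : X → E →L[ℝ] E} (hT : Continuous T) : Continuous fun ν => (T ν).rayleighSup :=
  (isCompact_sphere 0 1).continuous_sSup (f := fun ν x => ⟪x, T ν x⟫) <| by
    fun_prop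

end ContinuousLinearMap

section Lyapunov

variable {E : Type*} [NormedAddCommGroup E] [InnerProductSpace ℝ E]
  {s₀ : ℝ} {T : ℝ → E →L[ℝ] E} {v : ℝ → E}

lemma antitoneOn_norm_sq_mul_exp_neg_integral {m : ℝ → ℝ} (hm : Continuous m)
    (hv : ∀ r ≥ s₀, HasDerivAt v (T r (v r)) r)
    (hT : ∀ r ≥ s₀, ∀ x, 2 * ⟪x, T r x⟫ ≤ m r * ‖x‖ ^ 2) :
    AntitoneOn (fun r => ‖v r‖ ^ 2 * Real.exp (-∫ ν in s₀..r, m ν)) (Ici s₀) := by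
  have hderiv : ∀ r ≥ s₀, HasDerivAt (fun r => ‖v r‖ ^ 2 * Real.exp (-∫ ν in s₀..r, m ν))
      ((2 * ⟪v r, T r (v r)⟫ - m r * ‖v r‖ ^ 2) * Real.exp (-∫ ν in s₀..r, m ν)) r := by
    intro r hr
    have hI : HasDerivAt (fun r => ∫ ν in s₀..r, m ν) (m r) r :=
      integral_hasDerivAt_right (hm.intervalIntegrable _ _)
        hm.aestronglyMeasurable.stronglyMeasurableAtFilter hm.continuousAt
    exact ((hv r hr).norm_sq.fun_mul hI.fun_neg.exp).congr_deriv (by ring)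
  refine antitoneOn_of_hasDerivWithinAt_nonpos (convex_Ici s₀)
    (fun r hr => (hderiv r hr).continuousAt.continuousWithinAt)
    (fun r hr => (hderiv r (interior_subset hr)).hasDerivWithinAt)
    (fun r hr => mul_nonpos_of_nonpos_of_nonneg ?_ (Real.exp_pos _).le)
  linarith [hT r (interior_subset hr) (v r)]

theorem norm_le_mul_exp_half_integral [FiniteDimensional ℝ E] [Nontrivial E]
    (hT : Continuous T) {ℓ : ℝ → ℝ} (hℓ : LocallyIntegrable ℓ volume)
    (hTℓ : ∀ r ≥ s₀, ∀ x, 2 * ⟪x, T r x⟫ ≤ ℓ r * ‖x‖ ^ 2)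
    (hv : ∀ r ≥ s₀, HasDerivAt v (T r (v r)) r) {s : ℝ} (hs : s₀ ≤ s) :
    ‖v s‖ ≤ ‖v s₀‖ * Real.exp ((∫ ν in s₀..s, ℓ ν) / 2) := by
  -- `ℓ` need not be continuous, so integrate the continuous `2 λ_max(T)` below it instead.
  set m : ℝ → ℝ := fun r => 2 * (T r).rayleighSup
  have hm : Continuous m := continuous_const.mul (ContinuousLinearMap.continuous_rayleighSup hT)
  have hTm : ∀ r ≥ s₀, ∀ x, 2 * ⟪x, T r x⟫ ≤ m r * ‖x‖ ^ 2 := fun r _ x => by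
    linarith [(T r).inner_le_rayleighSup_mul_norm_sq x]
  have hmℓ : (∫ ν in s₀..s, m ν) ≤ ∫ ν in s₀..s, ℓ ν := by
    refine integral_mono_on hs (hm.intervalIntegrable _ _)
      ((hℓ.integrableOn_isCompact isCompact_uIcc).intervalIntegrable) fun r hr => ?_
    have := (T r).rayleighSup_le (c := ℓ r / 2) fun x => by linarith [hTℓ r hr.1 x]
    linarith
  have hanti := antitoneOn_norm_sq_mul_exp_neg_integral hm hv hTm self_mem_Ici hs hs
  simp only [integral_same, neg_zero, Real.exp_zero, mul_one] at hanti
  have hsq : ‖v s‖ ^ 2 ≤ (‖v s₀‖ * Real.exp ((∫ ν in s₀..s, ℓ ν) / 2)) ^ 2 := by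
    rw [mul_pow, ← Real.exp_nat_mul, Nat.cast_ofNat, mul_div_cancel₀ _ two_ne_zero]
    calc ‖v s‖ ^ 2
        = ‖v s‖ ^ 2 * Real.exp (-∫ ν in s₀..s, m ν) * Real.exp (∫ ν in s₀..s, m ν) := by
          rw [mul_assoc, ← Real.exp_add, neg_add_cancel, Real.exp_zero, mul_one]
      _ ≤ ‖v s₀‖ ^ 2 * Real.exp (∫ ν in s₀..s, ℓ ν) := by gcongr
  exact (sq_le_sq₀ (norm_nonneg _) (by positivity)).1 hsq

end Lyapunov

open WithLp

lemma EuclideanSpace.norm_sq_eq_dotProduct {n : Type*} [Fintype n] (x : EuclideanSpace ℝ n) :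
    ‖x‖ ^ 2 = ofLp x ⬝ᵥ ofLp x := by
  rw [← real_inner_self_eq_norm_sq, EuclideanSpace.inner_eq_star_dotProduct, star_trivial]

namespace Matrix

variable {m n : Type*} [Fintype n]

lemma hasDerivAt_mulVec {Ψ : ℝ → Matrix m n ℝ} {Ψ' : Matrix m n ℝ} {r : ℝ}
    (h : ∀ i j, HasDerivAt (fun t => Ψ t i j) (Ψ' i j) r) (x : n → ℝ) :
    HasDerivAt (fun t => Ψ t *ᵥ x) (Ψ' *ᵥ x) r :=
  hasDerivAt_pi.2 fun i => by
    simpa only [mulVec, dotProduct] using HasDerivAt.fun_sum fun j _ => (h i j).mul_const (x j)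

variable [DecidableEq n]

lemma hasDerivAt_toEuclideanCLM_apply {Ψ : ℝ → Matrix n n ℝ} {Ψ' : Matrix n n ℝ} {r : ℝ}
    (h : ∀ i j, HasDerivAt (fun t => Ψ t i j) (Ψ' i j) r) (x : EuclideanSpace ℝ n) :
    HasDerivAt (fun t => toEuclideanCLM (𝕜 := ℝ) (Ψ t) x) (toEuclideanCLM (𝕜 := ℝ) Ψ' x) r :=
  (EuclideanSpace.equiv n ℝ).symm.hasFDerivAt.comp_hasDerivAt r (hasDerivAt_mulVec h (ofLp x))

lemma two_mul_inner_toEuclideanCLM_self (A : Matrix n n ℝ) (x : EuclideanSpace ℝ n) :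
    2 * ⟪x, toEuclideanCLM (𝕜 := ℝ) A x⟫ = ofLp x ⬝ᵥ (A + Aᵀ) *ᵥ ofLp x := by
  rw [inner_toEuclideanCLM, add_mulVec, dotProduct_add, dotProduct_mulVec _ Aᵀ,
    vecMul_transpose, dotProduct_comm (A *ᵥ _)]
  ring

lemma continuous_toEuclideanCLM {X : Type*} [TopologicalSpace X] {A : X → Matrix n n ℝ}
    (hA : Continuous A) : Continuous fun ν => toEuclideanCLM (𝕜 := ℝ) (A ν) :=
  ((toEuclideanCLM (n := n) (𝕜 := ℝ)).toAlgEquiv.toLinearEquiv.toLinearMap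
    |>.continuous_of_finiteDimensional).comp hA

end Matrix

theorem uniform_exponential_stability_eigenvalue_bound_general
    (p : ℕ) (hp : 1 ≤ p) (s₀ : ℝ)
    (A : ℝ → Matrix (Fin p) (Fin p) ℝ) (hA : Continuous A)
    (Ψ : ℝ → Matrix (Fin p) (Fin p) ℝ) (hΨ0 : Ψ s₀ = 1)
    (hΨ : ∀ s ≥ s₀, ∀ i j : Fin p,
      HasDerivAt (fun r => Ψ r i j) ((A s * Ψ s) i j) s)
    (ℓ : ℝ → ℝ) (hℓ : LocallyIntegrable ℓ (volume : Measure ℝ))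
    (hquad : ∀ x : Fin p → ℝ, ∀ ν ≥ s₀,
      x ⬝ᵥ ((A ν + (A ν)ᵀ).mulVec x) ≤ ℓ ν * (x ⬝ᵥ x))
    (lam γ : ℝ)
    (hint : ∀ s ≥ s₀, (∫ ν in s₀..s, ℓ ν) ≤ -lam * (s - s₀) + γ) :
    ∀ s ≥ s₀, ‖Matrix.toEuclideanCLM (𝕜 := ℝ) (Ψ s)‖ ≤
      Real.exp (γ / 2) * Real.exp (-(lam / 2) * (s - s₀)) := by
  intro s hs
  have : Nonempty (Fin p) := ⟨⟨0, hp⟩⟩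
  refine ContinuousLinearMap.opNorm_le_bound _ (by positivity) fun y => ?_
  have hdecay := norm_le_mul_exp_half_integral (v := fun r => toEuclideanCLM (𝕜 := ℝ) (Ψ r) y)
    (continuous_toEuclideanCLM hA) hℓ
    (fun r hr x => by
      rw [two_mul_inner_toEuclideanCLM_self, EuclideanSpace.norm_sq_eq_dotProduct]
      exact hquad _ r hr)
    (fun r hr => by
      simpa only [map_mul, mul_apply_eq_comp] using hasDerivAt_toEuclideanCLM_apply (hΨ r hr) y)
    hs
  calc ‖toEuclideanCLM (𝕜 := ℝ) (Ψ s) y‖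
      ≤ ‖y‖ * Real.exp ((∫ ν in s₀..s, ℓ ν) / 2) := by simpa [hΨ0] using hdecay
    _ ≤ ‖y‖ * Real.exp (γ / 2 + -(lam / 2) * (s - s₀)) := by
        gcongr
        linarith [hint s hs]
    _ = Real.exp (γ / 2) * Real.exp (-(lam / 2) * (s - s₀)) * ‖y‖ := by
        rw [Real.exp_add]; ring

/-- Proposition 4.15(a): if `⟨x, (A(ν)+A(ν)ᵀ)x⟩ ≤ ℓ(ν)‖x‖²` and
`∫_{s₀}^s ℓ(ν) dν ≤ −λ(s−s₀) + γ`, then the transition matrix `Ψ` of `Ψ' = A(s)Ψ`, `Ψ(s₀) = I`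
satisfies the exponential decay bound `‖Ψ(s)‖ ≤ e^{γ/2} e^{−(λ/2)(s−s₀)}` in the operator norm
induced by the Euclidean norm. -/
theorem uniform_exponential_stability_eigenvalue_bound
    (p : ℕ) (hp : 1 ≤ p) (s₀ : ℝ)
    (A : ℝ → Matrix (Fin p) (Fin p) ℝ) (hA : Continuous A)
    (Ψ : ℝ → Matrix (Fin p) (Fin p) ℝ) (hΨ0 : Ψ s₀ = 1)
    (hΨ : ∀ s ≥ s₀, ∀ i j : Fin p,
      HasDerivAt (fun r => Ψ r i j) ((A s * Ψ s) i j) s)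
    (ℓ : ℝ → ℝ) (hℓ : LocallyIntegrable ℓ (volume : Measure ℝ))
    (hquad : ∀ x : Fin p → ℝ, ∀ ν ≥ s₀,
      x ⬝ᵥ ((A ν + (A ν)ᵀ).mulVec x) ≤ ℓ ν * (x ⬝ᵥ x))
    (lam γ : ℝ) (hlam : 0 < lam) (hγ : 0 < γ)
    (hint : ∀ s ≥ s₀, (∫ ν in s₀..s, ℓ ν) ≤ -lam * (s - s₀) + γ) :
    ∀ s ≥ s₀, ‖Matrix.toEuclideanCLM (𝕜 := ℝ) (Ψ s)‖ ≤
      Real.exp (γ / 2) * Real.exp (-(lam / 2) * (s - s₀)) :=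
  uniform_exponential_stability_eigenvalue_bound_general p hp s₀ A hA Ψ hΨ0 hΨ ℓ hℓ hquad lam γ hint
end

section
/- Let A₂ = [[−2, 0], [0, −3]], 𝓐₂ = [[0, 1], [−6, −5]] ∈ M_{2×2}(ℝ), B₂ = (1, 1)ᵀ, 𝓑₂ = (5, 2)ᵀ ∈ ℝ². Then for every τ > 0 and every x = (x₁, x₂)ᵀ ∈ ℝ², 𝓑₂ᵀ · exp(τ 𝓐₂) · x − B₂ᵀ · exp(τ A₂) · x = 2 x₁ ( e^{−2τ} + e^{−3τ} ) + x₂ e^{−2τ}, where exp denotes the matrix exponential. In particular, this expression is strictly positive whenever x₁ > 0 and x₂ > 0. -/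
/-!
`𝓐₂` is the companion matrix of `(z + 2)(z + 3)`, so it is diagonalised by the Vandermonde
matrix of its eigenvalues `-2, -3`; hence both exponentials are explicit combinations of
`e^{-2τ}` and `e^{-3τ}`, and in the difference every coefficient is nonnegative.
-/

open Matrix NormedSpace

namespace Matrix

theorem exp_diagonal_real {n : Type*} [Fintype n] [DecidableEq n] (d : n → ℝ) :
    exp (diagonal d) = diagonal fun i => Real.exp (d i) := by
  rw [exp_diagonal, Pi.exp_def, Real.exp_eq_exp_ℝ]

theorem inv_vandermonde_two {a b : ℝ} (hab : a ≠ b) :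
    (!![1, 1; a, b])⁻¹ = (b - a)⁻¹ • !![b, -1; -a, 1] := by
  have hba : b - a ≠ 0 := sub_ne_zero.mpr hab.symm
  refine inv_eq_right_inv ?_
  ext i j
  fin_cases i <;> fin_cases j <;> simp [mul_apply, Fin.sum_univ_two] <;> field_simp <;> ring

theorem exp_smul_companion_two {a b : ℝ} (hab : a ≠ b) (τ : ℝ) :
    exp (τ • !![0, 1; -(a * b), a + b]) =
      (b - a)⁻¹ • !![b * Real.exp (a * τ) - a * Real.exp (b * τ),
          Real.exp (b * τ) - Real.exp (a * τ);
        a * b * (Real.exp (a * τ) - Real.exp (b * τ)),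
          b * Real.exp (b * τ) - a * Real.exp (a * τ)] := by
  have hba : b - a ≠ 0 := sub_ne_zero.mpr hab.symm
  have hP : IsUnit !![1, 1; a, b] := by
    rw [isUnit_iff_isUnit_det, det_fin_two_of]
    simpa using hba.isUnit
  have hconj : τ • !![0, 1; -(a * b), a + b] =
      !![1, 1; a, b] * diagonal ![a * τ, b * τ] * (!![1, 1; a, b])⁻¹ := by
    rw [inv_vandermonde_two hab, diagonal_fin_two]
    ext i j
    fin_cases i <;> fin_cases j <;> simp [mul_apply, Fin.sum_univ_two] <;> field_simp <;> ring
  rw [hconj, exp_conj _ _ hP, exp_diagonal_real, diagonal_fin_two, inv_vandermonde_two hab]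
  ext i j
  fin_cases i <;> fin_cases j <;> simp [mul_apply, Fin.sum_univ_two] <;> ring

end Matrix

theorem carma_state_space_counterexample_exp_general
    (τ : ℝ) (x : Fin 2 → ℝ) :
    (![(5 : ℝ), 2] ⬝ᵥ (exp (τ • !![(0 : ℝ), 1; -6, -5])).mulVec x -
        ![(1 : ℝ), 1] ⬝ᵥ (exp (τ • !![(-2 : ℝ), 0; 0, -3])).mulVec x =
      2 * x 0 * (Real.exp (-2 * τ) + Real.exp (-3 * τ)) + x 1 * Real.exp (-2 * τ)) ∧
    (0 < x 0 → 0 < x 1 →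
      0 < ![(5 : ℝ), 2] ⬝ᵥ (exp (τ • !![(0 : ℝ), 1; -6, -5])).mulVec x -
        ![(1 : ℝ), 1] ⬝ᵥ (exp (τ • !![(-2 : ℝ), 0; 0, -3])).mulVec x) := by
  have hcompanion : !![(0 : ℝ), 1; -6, -5] = !![0, 1; -(-2 * -3), -2 + -3] := by norm_num
  have hdiag : τ • !![(-2 : ℝ), 0; 0, -3] = diagonal ![-2 * τ, -3 * τ] := by
    rw [diagonal_fin_two]
    ext i j
    fin_cases i <;> fin_cases j <;> simp [mul_comm]
  have heq : ![(5 : ℝ), 2] ⬝ᵥ (exp (τ • !![(0 : ℝ), 1; -6, -5])).mulVec x -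
        ![(1 : ℝ), 1] ⬝ᵥ (exp (τ • !![(-2 : ℝ), 0; 0, -3])).mulVec x =
      2 * x 0 * (Real.exp (-2 * τ) + Real.exp (-3 * τ)) + x 1 * Real.exp (-2 * τ) := by
    rw [hcompanion, exp_smul_companion_two (by norm_num), hdiag, exp_diagonal_real]
    simp [mulVec, dotProduct, Fin.sum_univ_two]
    ring
  refine ⟨heq, fun hx₀ hx₁ => heq ▸ by positivity⟩

/-- The explicit matrix exponential computation from the CARMA vs. state space counterexample:
for `A₂ = diag(−2,−3)`, `𝓐₂ = [[0,1],[−6,−5]]`, `B₂ = (1,1)ᵀ`, `𝓑₂ = (5,2)ᵀ`, one has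
`𝓑₂ᵀ e^{τ𝓐₂} x − B₂ᵀ e^{τA₂} x = 2x₁(e^{−2τ} + e^{−3τ}) + x₂ e^{−2τ}`, which is strictly
positive whenever `x₁ > 0` and `x₂ > 0`. -/
theorem carma_state_space_counterexample_exp
    (τ : ℝ) (hτ : 0 < τ) (x : Fin 2 → ℝ) :
    (![(5 : ℝ), 2] ⬝ᵥ (exp (τ • !![(0 : ℝ), 1; -6, -5])).mulVec x -
        ![(1 : ℝ), 1] ⬝ᵥ (exp (τ • !![(-2 : ℝ), 0; 0, -3])).mulVec x =
      2 * x 0 * (Real.exp (-2 * τ) + Real.exp (-3 * τ)) + x 1 * Real.exp (-2 * τ)) ∧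
    (0 < x 0 → 0 < x 1 →
      0 < ![(5 : ℝ), 2] ⬝ᵥ (exp (τ • !![(0 : ℝ), 1; -6, -5])).mulVec x -
        ![(1 : ℝ), 1] ⬝ᵥ (exp (τ • !![(-2 : ℝ), 0; 0, -3])).mulVec x) :=
  carma_state_space_counterexample_exp_general τ x
end
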